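/- arXiv:2112.05445 — 7 statements merged into one kernel-verified Lean document; each statement's English description precedes it below -/
import Mathlib

section
/- For integers 0 ≤ s ≤ t, one has C(2t, 2s) · (2t-2s-1)!! ≤ C(t, s) · (e·t)^(t-s), where C(n,k) denotes the binomial coefficient and (2m-1)!! = (2m)!/(2^m · m!) with (-1)!! = 1. -/
private lemma nat_key (s : ℕ) : ∀ t, s ≤ t →
    (2*t).factorial * s.factorial ≤
      (2*s).factorial * t.factorial * (2*t)^(t-s) * 2^(t-s) := by
  intro t ht
  induction t, ht using Nat.le_induction with
  | base => simp
  | succ t ht ih =>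
    have hk : t + 1 - s = (t - s) + 1 := by omega
    have hfac : (2*(t+1)).factorial = (2*t+2) * ((2*t+1) * (2*t).factorial) := by
      rw [show 2*(t+1) = (2*t+1)+1 by ring, Nat.factorial_succ, Nat.factorial_succ]
    rw [hk, hfac, Nat.factorial_succ]
    calc (2*t+2) * ((2*t+1) * (2*t).factorial) * s.factorial
        ≤ (2*t+2) * ((2*t+2) * (2*t).factorial) * s.factorial := by gcongr <;> omega
      _ = (2*t+2) * (2*t+2) * ((2*t).factorial * s.factorial) := by ring
      _ ≤ (2*t+2) * (2*t+2) * ((2*s).factorial * t.factorial * (2*t)^(t-s) * 2^(t-s)) := by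
          gcongr
      _ ≤ (2*t+2) * (2*t+2) * ((2*s).factorial * t.factorial * (2*(t+1))^(t-s) * 2^(t-s)) := by
          gcongr <;> omega
      _ = (2*s).factorial * ((t+1) * t.factorial) * (2*(t+1))^(t-s+1) * 2^(t-s+1) := by
          ring

private lemma nat_G (s t : ℕ) (hst : s ≤ t) :
    (2*t).choose (2*s) * (2*(t-s)).factorial ≤
      t.choose s * (2*t)^(t-s) * (2^(t-s) * (t-s).factorial) := by
  have hpos : 0 < (2*s).factorial * s.factorial :=
    Nat.mul_pos (Nat.factorial_pos _) (Nat.factorial_pos _)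
  apply Nat.le_of_mul_le_mul_right _ hpos
  have hc1 : (2*t).choose (2*s) * (2*s).factorial * (2*(t-s)).factorial =
      (2*t).factorial := by
    have := Nat.choose_mul_factorial_mul_factorial
      (show 2*s ≤ 2*t by omega)
    rwa [show 2*t - 2*s = 2*(t-s) by omega] at this
  have hc2 : t.choose s * s.factorial * (t-s).factorial = t.factorial :=
    Nat.choose_mul_factorial_mul_factorial hst
  calc (2*t).choose (2*s) * (2*(t-s)).factorial * ((2*s).factorial * s.factorial)
      = ((2*t).choose (2*s) * (2*s).factorial * (2*(t-s)).factorial) * s.factorial := by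
        ring
    _ = (2*t).factorial * s.factorial := by rw [hc1]
    _ ≤ (2*s).factorial * t.factorial * (2*t)^(t-s) * 2^(t-s) := nat_key s t hst
    _ = t.choose s * (2*t)^(t-s) * (2^(t-s) * (t-s).factorial) *
          ((2*s).factorial * s.factorial) := by rw [← hc2]; ring

/-- For integers `0 ≤ s ≤ t`:
`C(2t, 2s) * (2t - 2s - 1)!! ≤ C(t, s) * (e * t)^(t - s)`,
where `(2m - 1)!! = (2m)! / (2^m * m!)`. -/
theorem stmt1 (s t : ℕ) (hst : s ≤ t) :
    (Nat.choose (2 * t) (2 * s) : ℝ) *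
        (((2 * (t - s)).factorial : ℝ) / (2 ^ (t - s) * ((t - s).factorial : ℝ)))
      ≤ (Nat.choose t s : ℝ) * (Real.exp 1 * t) ^ (t - s) := by
  rcases Nat.eq_zero_or_pos t with rfl | htpos
  · interval_cases s; simp
  have hden : (0:ℝ) < 2 ^ (t-s) * ((t-s).factorial : ℝ) := by positivity
  rw [← mul_div_assoc, div_le_iff₀ hden]
  have he : (2:ℝ) * t ≤ Real.exp 1 * t := by
    have h2 : (2:ℝ) ≤ Real.exp 1 := by
      have := Real.add_one_le_exp (1:ℝ)
      linarith
    have : (0:ℝ) ≤ (t:ℝ) := by positivity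
    nlinarith
  calc ((2*t).choose (2*s) : ℝ) * ((2*(t-s)).factorial : ℝ)
      = (((2*t).choose (2*s) * (2*(t-s)).factorial : ℕ) : ℝ) := by push_cast; ring
    _ ≤ ((t.choose s * (2*t)^(t-s) * (2^(t-s) * (t-s).factorial) : ℕ) : ℝ) := by
        exact_mod_cast nat_G s t hst
    _ = (t.choose s : ℝ) * ((2:ℝ)*t)^(t-s) * (2^(t-s) * ((t-s).factorial : ℝ)) := by
        push_cast; ring
    _ ≤ (t.choose s : ℝ) * (Real.exp 1 * t)^(t-s) * (2^(t-s) * ((t-s).factorial : ℝ)) := by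
        gcongr
end

section
/- For integers 0 ≤ s ≤ t, one has C(2t, 2s) · (2t-2s-1)!! ≥ C(t, s) · (t/2)^(t-s), where (2m-1)!! = (2m)!/(2^m · m!) with (-1)!! = 1. -/
/-!
Write `m = t - s`. Since `(2m - 1)!! = (2m)! / (2^m m!)`, the claim is
`C(t, s) t^m m! ≤ C(2t, 2s) (2m)!`. Vandermonde's identity gives `C(t, s)^2 ≤ C(2t, 2s)`, and with
`C(t, s) = C(t, m)` it remains to show `t^m m! ≤ C(t, m) (2m)!`, i.e.
`t^m m! ≤ t(t-1)⋯(t-m+1) · 2m(2m-1)⋯(m+1)`. This holds factor by factor: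
`t (m - i) ≤ (t - i)(2m - i)` for `i < m ≤ t`, the difference being `tm - 2im + i² ≥ (m - i)²`.
-/

open Finset

namespace Nat

theorem choose_mul_choose_le_choose_two_mul (t s : ℕ) :
    t.choose s * t.choose s ≤ (2 * t).choose (2 * s) := by
  rw [two_mul t, add_choose_eq]
  have hmem : (s, s) ∈ antidiagonal (2 * s) := by
    rw [HasAntidiagonal.mem_antidiagonal, two_mul]
  exact single_le_sum (f := fun ij => t.choose ij.1 * t.choose ij.2)
    (fun _ _ => Nat.zero_le _) hmem

theorem mul_sub_le_sub_mul_two_mul_sub {t m i : ℕ} (him : i < m) (hmt : m ≤ t) :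
    t * (m - i) ≤ (t - i) * (2 * m - i) := by
  obtain ⟨a, rfl⟩ : ∃ a, t = m + a := ⟨t - m, by omega⟩
  obtain ⟨b, rfl⟩ : ∃ b, m = i + b := ⟨m - i, by omega⟩
  rw [show i + b + a - i = b + a by omega, show 2 * (i + b) - i = i + 2 * b by omega,
    show i + b - i = b by omega]
  nlinarith

theorem pow_mul_factorial_le_descFactorial_mul_descFactorial {m t : ℕ} (hmt : m ≤ t) :
    t ^ m * m ! ≤ t.descFactorial m * (2 * m).descFactorial m := by
  have hprod : t ^ m * m ! = ∏ i ∈ range m, t * (m - i) := by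
    rw [prod_mul_distrib, prod_const, card_range, ← descFactorial_self,
      descFactorial_eq_prod_range]
  rw [hprod, descFactorial_eq_prod_range, descFactorial_eq_prod_range, ← prod_mul_distrib]
  exact prod_le_prod' fun i hi => mul_sub_le_sub_mul_two_mul_sub (mem_range.mp hi) hmt

theorem pow_mul_factorial_le_choose_mul_factorial_two_mul {m t : ℕ} (hmt : m ≤ t) :
    t ^ m * m ! ≤ t.choose m * (2 * m)! := by
  have hdesc : m ! * (2 * m).descFactorial m = (2 * m)! := by
    simpa [show 2 * m - m = m by omega] using factorial_mul_descFactorial (show m ≤ 2 * m by omega)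
  refine Nat.le_of_mul_le_mul_right ?_ (factorial_pos m)
  calc t ^ m * m ! * m !
      ≤ t.descFactorial m * (2 * m).descFactorial m * m ! :=
        Nat.mul_le_mul_right _ (pow_mul_factorial_le_descFactorial_mul_descFactorial hmt)
    _ = t.choose m * (m ! * (2 * m).descFactorial m) * m ! := by
        rw [descFactorial_eq_factorial_mul_choose]; ring
    _ = t.choose m * (2 * m)! * m ! := by rw [hdesc]

theorem choose_mul_pow_mul_factorial_le {s t : ℕ} (hst : s ≤ t) :
    t.choose s * (t ^ (t - s) * (t - s)!) ≤ (2 * t).choose (2 * s) * (2 * (t - s))! :=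
  calc t.choose s * (t ^ (t - s) * (t - s)!)
      ≤ t.choose s * (t.choose (t - s) * (2 * (t - s))!) :=
        Nat.mul_le_mul_left _ (pow_mul_factorial_le_choose_mul_factorial_two_mul (sub_le t s))
    _ = t.choose s * t.choose s * (2 * (t - s))! := by rw [choose_symm hst, Nat.mul_assoc]
    _ ≤ (2 * t).choose (2 * s) * (2 * (t - s))! :=
        Nat.mul_le_mul_right _ (choose_mul_choose_le_choose_two_mul t s)

end Nat

/-- For integers `0 ≤ s ≤ t`:
`C(2t, 2s) * (2t - 2s - 1)!! ≥ C(t, s) * (t/2)^(t - s)`,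
where `(2m - 1)!! = (2m)! / (2^m * m!)`. -/
theorem stmt2 (s t : ℕ) (hst : s ≤ t) :
    (Nat.choose (2 * t) (2 * s) : ℝ) *
        (((2 * (t - s)).factorial : ℝ) / (2 ^ (t - s) * ((t - s).factorial : ℝ)))
      ≥ (Nat.choose t s : ℝ) * ((t : ℝ) / 2) ^ (t - s) := by
  set m := t - s
  have key : (t.choose s : ℝ) * ((t : ℝ) ^ m * (m.factorial : ℝ))
      ≤ ((2 * t).choose (2 * s) : ℝ) * ((2 * m).factorial : ℝ) := by
    exact_mod_cast Nat.choose_mul_pow_mul_factorial_le hst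
  rw [ge_iff_le, div_pow, mul_div_assoc', mul_div_assoc',
    div_le_div_iff₀ (by positivity) (by positivity)]
  calc (t.choose s : ℝ) * (t : ℝ) ^ m * (2 ^ m * (m.factorial : ℝ))
      = (t.choose s : ℝ) * ((t : ℝ) ^ m * (m.factorial : ℝ)) * 2 ^ m := by ring
    _ ≤ ((2 * t).choose (2 * s) : ℝ) * ((2 * m).factorial : ℝ) * 2 ^ m := by gcongr
end

section
/- Let p, q : ℝ → ℝ with p(x) ≥ 0 for all x, let γ > 1 be real and t ≥ 2 an even integer. If q(x) - 1 - γ(p(x) - 1) ≥ 0 for all x ∈ ℝ, then q(x)^t - 1 - γ(p(x)^t - 1) ≥ 0 for all x ∈ ℝ. -/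
lemma key6 (a γ : ℝ) (ha : 0 ≤ a) (hγ : 1 < γ) (t : ℕ)
    (hc : 0 ≤ 1 + γ * (a - 1)) :
    γ * (a ^ t - 1) ≤ (1 + γ * (a - 1)) ^ t - 1 := by
  set c := 1 + γ * (a - 1) with hcdef
  have h1 : c ^ t - 1 = (∑ i ∈ Finset.range t, c ^ i) * (c - 1) := (geom_sum_mul c t).symm
  have h2 : a ^ t - 1 = (∑ i ∈ Finset.range t, a ^ i) * (a - 1) := (geom_sum_mul a t).symm
  have hγ0 : (0:ℝ) ≤ γ := by linarith
  rcases le_total a 1 with hle | hge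
  · have hca : c ≤ a := by nlinarith
    have hsum : ∑ i ∈ Finset.range t, c ^ i ≤ ∑ i ∈ Finset.range t, a ^ i :=
      Finset.sum_le_sum fun i _ => pow_le_pow_left₀ hc hca i
    have h1' : c ^ t - 1 = γ * ((∑ i ∈ Finset.range t, c ^ i) * (a - 1)) := by
      rw [h1]; ring
    have h2' : γ * (a ^ t - 1) = γ * ((∑ i ∈ Finset.range t, a ^ i) * (a - 1)) := by
      rw [h2]
    linarith [mul_nonneg (mul_nonneg (sub_nonneg.2 hsum) (sub_nonneg.2 hle)) hγ0]
  · have hca : a ≤ c := by nlinarith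
    have hsum : ∑ i ∈ Finset.range t, a ^ i ≤ ∑ i ∈ Finset.range t, c ^ i :=
      Finset.sum_le_sum fun i _ => pow_le_pow_left₀ ha hca i
    have h1' : c ^ t - 1 = γ * ((∑ i ∈ Finset.range t, c ^ i) * (a - 1)) := by
      rw [h1]; ring
    have h2' : γ * (a ^ t - 1) = γ * ((∑ i ∈ Finset.range t, a ^ i) * (a - 1)) := by
      rw [h2]
    linarith [mul_nonneg (mul_nonneg (sub_nonneg.2 hsum) (sub_nonneg.2 hge)) hγ0]

/-- Amplification of a linear domination inequality to `t`-th powers: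
`p, q : ℝ → ℝ` with `p ≥ 0` pointwise, `γ > 1`, `t ≥ 2` even. If
`q(x) - 1 - γ (p(x) - 1) ≥ 0` for all `x`, then
`q(x)^t - 1 - γ (p(x)^t - 1) ≥ 0` for all `x`. -/
theorem stmt6 (p q : ℝ → ℝ) (hp : ∀ x, 0 ≤ p x) (γ : ℝ) (hγ : 1 < γ)
    (t : ℕ) (ht : 2 ≤ t) (hte : Even t)
    (h : ∀ x, 0 ≤ q x - 1 - γ * (p x - 1)) :
    ∀ x, 0 ≤ q x ^ t - 1 - γ * (p x ^ t - 1) := by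
  intro x
  set a := p x with hadef
  set b := q x with hbdef
  have ha : 0 ≤ a := hp x
  have hb : 1 + γ * (a - 1) ≤ b := by have := h x; linarith
  rcases le_or_gt 0 (1 + γ * (a - 1)) with hc | hc
  · have hbt : (1 + γ * (a - 1)) ^ t ≤ b ^ t := pow_le_pow_left₀ hc hb t
    have := key6 a γ ha hγ t hc
    linarith
  · -- c < 0: then a < 1, a^t ≤ a, so 1 + γ(a^t - 1) < 0 ≤ b^t
    have ha1 : a ≤ 1 := by nlinarith
    have hat : a ^ t ≤ a := by
      calc a ^ t ≤ a ^ 1 := pow_le_pow_of_le_one ha ha1 (by omega)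
        _ = a := pow_one a
    have hbt : 0 ≤ b ^ t := hte.pow_nonneg b
    nlinarith
end

section
/- Let p, q : ℝ → ℝ, let γ > 0 be real and t ≥ 2 an even integer. If q(x) - 1 - γ(1 - p(x)) ≥ 0 for all x ∈ ℝ, then q(x)^t - 1 - γ(1 - p(x)^t) ≥ 0 for all x ∈ ℝ. -/
lemma aux_tangent (t : ℕ) (hte : Even t) (x : ℝ) :
    1 + (t : ℝ) * (x - 1) ≤ x ^ t := by
  rcases le_or_gt (-1) x with hx | hx
  · have h := one_add_mul_le_pow (a := x - 1) (by linarith) t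
    calc 1 + (t : ℝ) * (x - 1) ≤ (1 + (x - 1)) ^ t := h
      _ = x ^ t := by ring_nf
  · have hxt : (0:ℝ) ≤ x ^ t := hte.pow_nonneg x
    rcases Nat.eq_zero_or_pos t with rfl | htpos
    · simp
    · have ht1 : (1:ℝ) ≤ (t : ℝ) := by exact_mod_cast htpos
      nlinarith

/-- Amplification with reversed sign:
`p, q : ℝ → ℝ`, `γ > 0`, `t ≥ 2` even. If
`q(x) - 1 - γ (1 - p(x)) ≥ 0` for all `x`, then
`q(x)^t - 1 - γ (1 - p(x)^t) ≥ 0` for all `x`. -/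
theorem stmt7 (p q : ℝ → ℝ) (γ : ℝ) (hγ : 0 < γ)
    (t : ℕ) (ht : 2 ≤ t) (hte : Even t)
    (h : ∀ x, 0 ≤ q x - 1 - γ * (1 - p x)) :
    ∀ x, 0 ≤ q x ^ t - 1 - γ * (1 - p x ^ t) := by
  intro x
  have h1 := aux_tangent t hte (q x)
  have h2 := aux_tangent t hte (p x)
  have h3 := h x
  have ht0 : (0:ℝ) ≤ (t:ℝ) := Nat.cast_nonneg t
  nlinarith [mul_nonneg (mul_nonneg hγ.le ht0) h3]
end

section
/- For every real γ > 1 and even integer t ≥ 2, the univariate polynomial f(x) = (1 + γ(x-1))^t - 1 - γ(x^t - 1) is nonnegative for all x ∈ ℝ. -/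
/-! Since `γ > 1`, the point `x` is the convex combination
`x = γ⁻¹ (1 + γ (x - 1)) + (1 - γ⁻¹) · 1`, so convexity of `u ↦ u ^ t` for even `t` gives
`x ^ t ≤ γ⁻¹ (1 + γ (x - 1)) ^ t + (1 - γ⁻¹)`; multiplying by `γ` is the claim. -/

theorem ConvexOn.smul_le_extrapolate {E : Type*} [AddCommGroup E] [Module ℝ E] {f : E → ℝ}
    (hf : ConvexOn ℝ Set.univ f) {γ : ℝ} (hγ : 1 ≤ γ) (a x : E) :
    γ * f x ≤ f (a + γ • (x - a)) + (γ - 1) * f a := by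
  have hγ0 : 0 < γ := by linarith
  have hcomb : γ⁻¹ • (a + γ • (x - a)) + (1 - γ⁻¹) • a = x := by
    rw [smul_add, smul_smul, inv_mul_cancel₀ hγ0.ne', one_smul, sub_smul, one_smul]
    abel
  have hconv := hf.2 (Set.mem_univ (a + γ • (x - a))) (Set.mem_univ a)
    (inv_nonneg.2 hγ0.le) (sub_nonneg.2 (inv_le_one_of_one_le₀ hγ)) (add_sub_cancel _ _)
  rw [hcomb, smul_eq_mul, smul_eq_mul] at hconv
  calc γ * f x ≤ γ * (γ⁻¹ * f (a + γ • (x - a)) + (1 - γ⁻¹) * f a) :=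
        mul_le_mul_of_nonneg_left hconv hγ0.le
    _ = f (a + γ • (x - a)) + (γ - 1) * f a := by field_simp

theorem stmt8_general (γ : ℝ) (hγ : 1 < γ) (t : ℕ) (hte : Even t) (x : ℝ) :
    0 ≤ (1 + γ * (x - 1)) ^ t - 1 - γ * (x ^ t - 1) := by
  have h := hte.convexOn_pow.smul_le_extrapolate hγ.le 1 x
  simp only [smul_eq_mul, one_pow] at h
  linarith

/-- For `γ > 1` real and `t ≥ 2` even:
`f(x) = (1 + γ(x-1))^t - 1 - γ(x^t - 1)` is nonnegative on `ℝ`. -/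
theorem stmt8 (γ : ℝ) (hγ : 1 < γ) (t : ℕ) (ht : 2 ≤ t) (hte : Even t) (x : ℝ) :
    0 ≤ (1 + γ * (x - 1)) ^ t - 1 - γ * (x ^ t - 1) :=
  stmt8_general γ hγ t hte x
end

section
/- With the setting of the colinear-means Gaussian mixture model (y = μ + w, μ = ⟨μ, u⟩u discrete, w ∼ N(0,Σ) independent), for every integer t ≥ 1 and every v ∈ ℝ^d: E⟨y, v⟩^(2t) ≤ (⟨u, v⟩² · (E⟨μ, u⟩^(2t))^(1/t) + e·t·(vᵀΣv))^t. -/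
/-
Write `⟨y, v⟩ = a X + W` with `a = ⟨u, v⟩`, `X = ⟨μ, u⟩` bounded and `W = ⟨w, v⟩ ∼ N(0, vᵀΣv)`
independent of `X`. Expanding `(a X + W)^(2t)` binomially, independence factors each term and the
odd Gaussian moments vanish, leaving `∑ₛ C(2t, 2s) a^(2s) E[X^(2s)] (2(t-s)-1)‼ (vᵀΣv)^(t-s)`.
Jensen gives `E[X^(2s)] ≤ E[X^(2t)]^(s/t)`, and `C(2t, 2s) (2(t-s)-1)‼ ≤ C(t, s) (e t)^(t-s)`, so
the sum is dominated termwise by the binomial expansion of the right-hand side.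
-/

open MeasureTheory ProbabilityTheory Matrix Real Set
open scoped Nat NNReal

lemma Nat.factorial_two_mul_mul_factorial_le {s t : ℕ} (h : s ≤ t) :
    (2 * t)! * s ! ≤ (2 * s)! * t ! * (4 * t) ^ (t - s) := by
  induction t, h using Nat.le_induction with
  | base => simp
  | succ n hsn ih =>
    have h_pair : (2 * n + 2) * (2 * n + 1) ≤ 4 * (n + 1) * (n + 1) := by nlinarith
    rw [show 2 * (n + 1) = 2 * n + 1 + 1 by ring, show n + 1 - s = n - s + 1 by omega,
      Nat.factorial_succ, Nat.factorial_succ, Nat.factorial_succ n, pow_succ]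
    calc (2 * n + 1 + 1) * ((2 * n + 1) * (2 * n)!) * s !
        = (2 * n + 2) * (2 * n + 1) * ((2 * n)! * s !) := by ring
      _ ≤ 4 * (n + 1) * (n + 1) * ((2 * s)! * n ! * (4 * n) ^ (n - s)) := by gcongr
      _ ≤ 4 * (n + 1) * (n + 1) * ((2 * s)! * n ! * (4 * (n + 1)) ^ (n - s)) := by
        gcongr; omega
      _ = _ := by ring

lemma Nat.factorial_two_mul (r : ℕ) : (2 * r)! = 2 ^ r * r ! * (2 * r - 1)‼ := by
  cases r with
  | zero => rfl
  | succ r =>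
    rw [show 2 * (r + 1) - 1 = 2 * r + 1 by omega, show 2 * (r + 1) = 2 * r + 1 + 1 by ring,
      Nat.factorial_eq_mul_doubleFactorial, show 2 * r + 1 + 1 = 2 * (r + 1) by ring,
      Nat.doubleFactorial_two_mul]

lemma Nat.choose_two_mul_mul_doubleFactorial_le {s t : ℕ} (h : s ≤ t) :
    (2 * t).choose (2 * s) * (2 * (t - s) - 1)‼ ≤ t.choose s * (2 * t) ^ (t - s) := by
  set r := t - s
  have h_pos : 0 < (2 * s)! * (2 ^ r * r !) * s ! := by positivity
  refine Nat.le_of_mul_le_mul_right ?_ h_pos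
  calc (2 * t).choose (2 * s) * (2 * r - 1)‼ * ((2 * s)! * (2 ^ r * r !) * s !)
      = (2 * t).choose (2 * s) * (2 * s)! * (2 * r)! * s ! := by
        rw [Nat.factorial_two_mul r]; ring
    _ = (2 * t)! * s ! := by
        rw [← Nat.choose_mul_factorial_mul_factorial (by omega : 2 * s ≤ 2 * t),
          show 2 * t - 2 * s = 2 * r by omega]
    _ ≤ (2 * s)! * t ! * (4 * t) ^ r := Nat.factorial_two_mul_mul_factorial_le h
    _ = t.choose s * (2 * t) ^ r * ((2 * s)! * (2 ^ r * r !) * s !) := by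
        rw [← Nat.choose_mul_factorial_mul_factorial h,
          show (4 * t) ^ r = 2 ^ r * (2 * t) ^ r by rw [← mul_pow]; ring]
        ring

lemma choose_two_mul_mul_doubleFactorial_le_exp_one {s t : ℕ} (h : s ≤ t) :
    ((2 * t).choose (2 * s) * (2 * (t - s) - 1)‼ : ℝ) ≤ t.choose s * (exp 1 * t) ^ (t - s) := by
  have h_two : (2 : ℝ) ≤ exp 1 := by linarith [add_one_le_exp (1 : ℝ)]
  calc ((2 * t).choose (2 * s) * (2 * (t - s) - 1)‼ : ℝ)
      ≤ t.choose s * (2 * t) ^ (t - s) := by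
        exact_mod_cast Nat.choose_two_mul_mul_doubleFactorial_le h
    _ ≤ t.choose s * (exp 1 * t) ^ (t - s) := by gcongr

lemma Finset.sum_range_two_mul_add_one_of_odd_eq_zero {M : Type*} [AddCommMonoid M]
    (f : ℕ → M) (hf : ∀ k, f (2 * k + 1) = 0) (t : ℕ) :
    ∑ i ∈ range (2 * t + 1), f i = ∑ s ∈ range (t + 1), f (2 * s) := by
  induction t with
  | zero => simp
  | succ n ih =>
    rw [show 2 * (n + 1) + 1 = 2 * n + 1 + 1 + 1 by ring, sum_range_succ, sum_range_succ, ih,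
      sum_range_succ _ (n + 1), hf, add_zero, show 2 * n + 1 + 1 = 2 * (n + 1) by ring]

lemma integral_pow_mul_exp_neg_mul_sq (n : ℕ) {b : ℝ} (hb : 0 < b) :
    ∫ x, x ^ (2 * n) * exp (-b * x ^ 2) = Gamma (n + 1 / 2) / (b ^ n * √b) := by
  have h_even : (fun x : ℝ ↦ x ^ (2 * n) * exp (-b * x ^ 2))
      = fun x ↦ |x| ^ (2 * n) * exp (-b * |x| ^ 2) := by
    ext x; rw [sq_abs, Even.pow_abs (even_two_mul n)]
  have h_rpow : ∫ x in Ioi (0 : ℝ), x ^ (2 * n) * exp (-b * x ^ 2)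
      = ∫ x in Ioi (0 : ℝ), x ^ ((2 * n : ℕ) : ℝ) * exp (-b * x ^ (2 : ℝ)) := by
    simp only [rpow_natCast, rpow_two]
  rw [h_even, integral_comp_abs (f := fun x ↦ x ^ (2 * n) * exp (-b * x ^ 2)), h_rpow,
    integral_rpow_mul_exp_neg_mul_rpow two_pos (neg_one_lt_zero.trans_le (Nat.cast_nonneg _)) hb]
  push_cast
  rw [show (2 * n + 1 : ℝ) / 2 = n + 1 / 2 by ring,
    show -(2 * n + 1 : ℝ) / 2 = -(n + 1 / 2) by ring,
    rpow_neg hb.le, rpow_add hb, rpow_natCast, ← sqrt_eq_rpow]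
  field_simp

namespace ProbabilityTheory

lemma integrable_pow_gaussianReal (μ : ℝ) (v : ℝ≥0) (n : ℕ) :
    Integrable (fun x ↦ x ^ n) (gaussianReal μ v) :=
  integrable_pow_of_mem_interior_integrableExpSet (X := id)
    (by simp [integrableExpSet_id_gaussianReal]) n

lemma integral_pow_two_mul_add_one_gaussianReal (v : ℝ≥0) (n : ℕ) :
    ∫ x, x ^ (2 * n + 1) ∂gaussianReal 0 v = 0 := by
  have h := integral_map (μ := gaussianReal 0 v) (f := fun x : ℝ ↦ x ^ (2 * n + 1))
    measurable_neg.aemeasurable (by fun_prop)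
  rw [gaussianReal_map_neg, neg_zero] at h
  simp only [(odd_two_mul_add_one n).neg_pow, integral_neg] at h
  linarith

lemma integral_pow_two_mul_gaussianReal (v : ℝ≥0) (n : ℕ) :
    ∫ x, x ^ (2 * n) ∂gaussianReal 0 v = (2 * n - 1 : ℕ)‼ * (v : ℝ) ^ n := by
  rcases eq_or_ne v 0 with rfl | hv
  · cases n <;> simp [gaussianReal_zero_var]
  have h_pdf : (fun x ↦ gaussianPDFReal 0 v x • x ^ (2 * n))
      = fun x ↦ (√(2 * π * v))⁻¹ * (x ^ (2 * n) * exp (-(2 * v : ℝ)⁻¹ * x ^ 2)) := by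
    ext x
    rw [gaussianPDFReal, smul_eq_mul, sub_zero]
    ring_nf
  rw [integral_gaussianReal_eq_integral_smul hv, h_pdf, integral_const_mul,
    integral_pow_mul_exp_neg_mul_sq n (by positivity), Gamma_nat_add_half, sqrt_inv, inv_pow,
    sqrt_mul (by positivity), sqrt_mul (by positivity)]
  field_simp
  rw [mul_pow, sqrt_mul zero_le_two]
  ring

variable {Ω : Type*} [MeasurableSpace Ω] {P : Measure Ω}

lemma integrable_pow_of_abs_le [IsFiniteMeasure P] {X : Ω → ℝ} (hX : AEStronglyMeasurable X P)
    {C : ℝ} (hC : ∀ᵐ ω ∂P, |X ω| ≤ C) (n : ℕ) : Integrable (fun ω ↦ X ω ^ n) P :=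
  .of_bound (hX.pow n) (C ^ n) (hC.mono fun ω hω ↦ by
    rw [norm_pow, Real.norm_eq_abs]; exact pow_le_pow_left₀ (abs_nonneg _) hω n)

lemma integral_pow_two_mul_le_rpow [IsProbabilityMeasure P] {X : Ω → ℝ} {s t : ℕ} (hst : s ≤ t)
    (hs : Integrable (fun ω ↦ X ω ^ (2 * s)) P) (ht : Integrable (fun ω ↦ X ω ^ (2 * t)) P) :
    ∫ ω, X ω ^ (2 * s) ∂P ≤ (∫ ω, X ω ^ (2 * t) ∂P) ^ ((s : ℝ) / t) := by
  have h_exp : (0 : ℝ) ≤ s / t := by positivity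
  have h_exp_le : (s : ℝ) / t ≤ 1 := div_le_one_of_le₀ (by exact_mod_cast hst) (by positivity)
  have h_pow : ∀ x : ℝ, (x ^ (2 * t)) ^ ((s : ℝ) / t) = x ^ (2 * s) := by
    intro x
    rcases Nat.eq_zero_or_pos t with rfl | ht0
    · simp [Nat.le_zero.mp hst]
    rw [pow_mul, pow_mul, ← rpow_natCast (x ^ 2) t, ← rpow_mul (sq_nonneg x),
      mul_div_cancel₀ _ (by positivity), rpow_natCast]
  have h_jensen := (concaveOn_rpow h_exp h_exp_le).le_map_integral
    (continuous_rpow_const h_exp).continuousOn isClosed_Ici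
    (ae_of_all _ fun ω ↦ (even_two_mul t).pow_nonneg (X ω)) ht
    (hs.congr (ae_of_all _ fun ω ↦ (h_pow (X ω)).symm))
  simpa only [h_pow] using h_jensen

lemma IndepFun.integral_add_pow {X Y : Ω → ℝ} (hXY : IndepFun X Y P) (n : ℕ)
    (hX : ∀ i, Integrable (fun ω ↦ X ω ^ i) P) (hY : ∀ j, Integrable (fun ω ↦ Y ω ^ j) P) :
    ∫ ω, (X ω + Y ω) ^ n ∂P
      = ∑ i ∈ Finset.range (n + 1),
          (∫ ω, X ω ^ i ∂P) * (∫ ω, Y ω ^ (n - i) ∂P) * n.choose i := by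
  have h_indep : ∀ i j : ℕ, IndepFun (fun ω ↦ X ω ^ i) (fun ω ↦ Y ω ^ j) P := fun i j ↦
    hXY.comp (measurable_id.pow_const i) (measurable_id.pow_const j)
  have h_int : ∀ i, Integrable (fun ω ↦ X ω ^ i * Y ω ^ (n - i) * (n.choose i : ℝ)) P :=
    fun i ↦ ((h_indep i (n - i)).integrable_mul (hX i) (hY (n - i))).mul_const _
  simp_rw [add_pow]
  rw [integral_finsetSum _ fun i _ ↦ h_int i]
  refine Finset.sum_congr rfl fun i _ ↦ ?_
  rw [integral_mul_const, (h_indep i (n - i)).integral_fun_mul_eq_mul_integral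
    (hX i).aestronglyMeasurable (hY (n - i)).aestronglyMeasurable]

lemma integral_add_gaussian_pow_two_mul {X W : Ω → ℝ} {σ : ℝ≥0} (hXW : IndepFun X W P)
    (hX : ∀ i, Integrable (fun ω ↦ X ω ^ i) P) (hW : HasLaw W (gaussianReal 0 σ) P) (t : ℕ) :
    ∫ ω, (X ω + W ω) ^ (2 * t) ∂P
      = ∑ s ∈ Finset.range (t + 1),
          (2 * t).choose (2 * s) * (2 * (t - s) - 1)‼ * (σ : ℝ) ^ (t - s)
            * ∫ ω, X ω ^ (2 * s) ∂P := by
  have h_moment : ∀ j, ∫ ω, W ω ^ j ∂P = ∫ x, x ^ j ∂gaussianReal 0 σ := fun j ↦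
    hW.integral_comp (f := fun x ↦ x ^ j) (by fun_prop)
  have hW_int : ∀ j, Integrable (fun ω ↦ W ω ^ j) P := fun j ↦
    (integrable_map_measure (g := fun x : ℝ ↦ x ^ j) (by fun_prop) hW.aemeasurable).mp
      (hW.map_eq ▸ integrable_pow_gaussianReal 0 σ j)
  rw [hXW.integral_add_pow (2 * t) hX hW_int,
    Finset.sum_range_two_mul_add_one_of_odd_eq_zero _ ?odd]
  case odd =>
    intro k
    rcases le_or_gt (2 * k + 1) (2 * t) with hk | hk
    · rw [h_moment, show 2 * t - (2 * k + 1) = 2 * (t - k - 1) + 1 by omega,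
        integral_pow_two_mul_add_one_gaussianReal]
      ring
    · simp [Nat.choose_eq_zero_of_lt hk]
  refine Finset.sum_congr rfl fun s hs ↦ ?_
  rw [h_moment, show 2 * t - 2 * s = 2 * (t - s) by omega, integral_pow_two_mul_gaussianReal]
  ring

theorem integral_add_gaussian_pow_two_mul_le [IsProbabilityMeasure P] {X W : Ω → ℝ} {σ : ℝ≥0}
    (hXW : IndepFun X W P) (hX : ∀ i, Integrable (fun ω ↦ X ω ^ i) P)
    (hW : HasLaw W (gaussianReal 0 σ) P) (t : ℕ) :
    ∫ ω, (X ω + W ω) ^ (2 * t) ∂P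
      ≤ ((∫ ω, X ω ^ (2 * t) ∂P) ^ ((1 : ℝ) / t) + exp 1 * t * σ) ^ t := by
  set M := ∫ ω, X ω ^ (2 * t) ∂P
  have hM : 0 ≤ M := integral_nonneg fun ω ↦ (even_two_mul t).pow_nonneg (X ω)
  rw [integral_add_gaussian_pow_two_mul hXW hX hW, add_pow]
  refine Finset.sum_le_sum fun s hs ↦ ?_
  have hst : s ≤ t := Nat.lt_succ_iff.mp (Finset.mem_range.mp hs)
  have h_moment : ∫ ω, X ω ^ (2 * s) ∂P ≤ (M ^ ((1 : ℝ) / t)) ^ s := by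
    rw [← rpow_natCast, ← rpow_mul hM, one_div_mul_eq_div]
    exact integral_pow_two_mul_le_rpow hst (hX _) (hX _)
  calc ((2 * t).choose (2 * s) * (2 * (t - s) - 1)‼ : ℝ) * σ ^ (t - s) * ∫ ω, X ω ^ (2 * s) ∂P
      ≤ t.choose s * (exp 1 * t) ^ (t - s) * σ ^ (t - s) * (M ^ ((1 : ℝ) / t)) ^ s := by
        gcongr ?_ * _ * ?_
        · exact integral_nonneg fun ω ↦ (even_two_mul s).pow_nonneg (X ω)
        exact choose_two_mul_mul_doubleFactorial_le_exp_one hst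
    _ = (M ^ ((1 : ℝ) / t)) ^ s * (exp 1 * t * σ) ^ (t - s) * t.choose s := by ring

theorem integral_const_mul_add_gaussian_pow_two_mul_le [IsProbabilityMeasure P] {X W : Ω → ℝ}
    {σ : ℝ≥0} (a : ℝ) (hXW : IndepFun X W P) (hX : ∀ i, Integrable (fun ω ↦ X ω ^ i) P)
    (hW : HasLaw W (gaussianReal 0 σ) P) {t : ℕ} (ht : t ≠ 0) :
    ∫ ω, (a * X ω + W ω) ^ (2 * t) ∂P
      ≤ (a ^ 2 * (∫ ω, X ω ^ (2 * t) ∂P) ^ ((1 : ℝ) / t) + exp 1 * t * σ) ^ t := by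
  have h_moment : (∫ ω, (a * X ω) ^ (2 * t) ∂P) ^ ((1 : ℝ) / t)
      = a ^ 2 * (∫ ω, X ω ^ (2 * t) ∂P) ^ ((1 : ℝ) / t) := by
    simp only [mul_pow, integral_const_mul]
    rw [mul_rpow ((even_two_mul t).pow_nonneg _)
        (integral_nonneg fun ω ↦ (even_two_mul t).pow_nonneg _),
      pow_mul, one_div, pow_rpow_inv_natCast (sq_nonneg _) ht]
  have h_bound := integral_add_gaussian_pow_two_mul_le (X := fun ω ↦ a * X ω)
    (hXW.comp (measurable_const_mul a) measurable_id)
    (fun i ↦ by simpa only [mul_pow] using (hX i).const_mul (a ^ i)) hW t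
  rwa [h_moment] at h_bound

end ProbabilityTheory

theorem stmt10_general {Ω : Type*} [MeasurableSpace Ω] (P : Measure Ω) [IsProbabilityMeasure P]
    {d k : ℕ} (S : Matrix (Fin d) (Fin d) ℝ) (hS : S.PosSemidef)
    (u : Fin d → ℝ)
    (μRV wRV : Ω → (Fin d → ℝ))
    (hμmeas : Measurable μRV) (hwmeas : Measurable wRV)
    (m : Fin k → (Fin d → ℝ)) (hrange : ∀ ω, ∃ j, μRV ω = m j)
    (hcol : ∀ j, m j = (m j ⬝ᵥ u) • u)
    (hindep : IndepFun μRV wRV P)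
    (hgauss : ∀ v : Fin d → ℝ,
      Measure.map (fun ω => wRV ω ⬝ᵥ v) P
        = gaussianReal 0 (Real.toNNReal (v ⬝ᵥ S.mulVec v)))
    (t : ℕ) (ht : 1 ≤ t) (v : Fin d → ℝ) :
    ∫ ω, ((μRV ω + wRV ω) ⬝ᵥ v) ^ (2 * t) ∂P
      ≤ ((u ⬝ᵥ v) ^ 2 * (∫ ω, (μRV ω ⬝ᵥ u) ^ (2 * t) ∂P) ^ ((1 : ℝ) / t)
          + Real.exp 1 * t * (v ⬝ᵥ S.mulVec v)) ^ t := by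
  have hσ : ((v ⬝ᵥ S *ᵥ v).toNNReal : ℝ) = v ⬝ᵥ S *ᵥ v :=
    Real.coe_toNNReal _ (hS.dotProduct_mulVec_nonneg v)
  set X := fun ω ↦ μRV ω ⬝ᵥ u
  set W := fun ω ↦ wRV ω ⬝ᵥ v
  have h_split : ∀ ω, (μRV ω + wRV ω) ⬝ᵥ v = (u ⬝ᵥ v) * X ω + W ω := by
    intro ω
    obtain ⟨j, hj⟩ := hrange ω
    simp only [X, W, add_dotProduct, hj]
    conv_lhs => rw [hcol j]
    rw [smul_dotProduct, smul_eq_mul, mul_comm]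
  have hX_bdd : ∀ ω, |X ω| ≤ ∑ j, |m j ⬝ᵥ u| := by
    intro ω
    obtain ⟨j, hj⟩ := hrange ω
    simpa only [X, hj] using Finset.single_le_sum (f := fun j ↦ |m j ⬝ᵥ u|)
      (fun j _ ↦ abs_nonneg _) (Finset.mem_univ j)
  have hX_int : ∀ i, Integrable (fun ω ↦ X ω ^ i) P :=
    integrable_pow_of_abs_le (by fun_prop) (ae_of_all _ hX_bdd)
  have hXW : IndepFun X W P := hindep.comp (show Measurable (· ⬝ᵥ u) by fun_prop)
    (show Measurable (· ⬝ᵥ v) by fun_prop)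
  have hW : HasLaw W (gaussianReal 0 (v ⬝ᵥ S *ᵥ v).toNNReal) P :=
    ⟨(by fun_prop : Measurable W).aemeasurable, hgauss v⟩
  simp_rw [h_split]
  rw [← hσ]
  exact integral_const_mul_add_gaussian_pow_two_mul_le _ hXW hX_int hW (by omega)

/-- Moment upper bound for the colinear-means Gaussian mixture: `y = μ + w`, `μ` discrete
on the line spanned by unit vector `u`, `w ∼ N(0, Σ)` independent. For every `t ≥ 1`, `v`:
`E⟨y, v⟩^(2t) ≤ (⟨u,v⟩² (E⟨μ,u⟩^(2t))^(1/t) + e t (vᵀΣv))^t`. -/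
theorem stmt10 {Ω : Type*} [MeasurableSpace Ω] (P : Measure Ω) [IsProbabilityMeasure P]
    {d k : ℕ} (S : Matrix (Fin d) (Fin d) ℝ) (hS : S.PosSemidef)
    (u : Fin d → ℝ) (hu : u ⬝ᵥ u = 1)
    (μRV wRV : Ω → (Fin d → ℝ))
    (hμmeas : Measurable μRV) (hwmeas : Measurable wRV)
    (m : Fin k → (Fin d → ℝ)) (hrange : ∀ ω, ∃ j, μRV ω = m j)
    (hcol : ∀ j, m j = (m j ⬝ᵥ u) • u)
    (hindep : IndepFun μRV wRV P)
    (hgauss : ∀ v : Fin d → ℝ,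
      Measure.map (fun ω => wRV ω ⬝ᵥ v) P
        = gaussianReal 0 (Real.toNNReal (v ⬝ᵥ S.mulVec v)))
    (t : ℕ) (ht : 1 ≤ t) (v : Fin d → ℝ) :
    ∫ ω, ((μRV ω + wRV ω) ⬝ᵥ v) ^ (2 * t) ∂P
      ≤ ((u ⬝ᵥ v) ^ 2 * (∫ ω, (μRV ω ⬝ᵥ u) ^ (2 * t) ∂P) ^ ((1 : ℝ) / t)
          + Real.exp 1 * t * (v ⬝ᵥ S.mulVec v)) ^ t :=
  stmt10_general P S hS u μRV wRV hμmeas hwmeas m hrange hcol hindep hgauss t ht v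
end

section
/- Let 0 ≤ ε < 1/8, let u ∈ ℝ^d be a unit vector, and let M ∈ ℝ^(d×d) be a symmetric positive semidefinite matrix with Frobenius norm ‖M‖_F ≤ 1 and ⟨uuᵀ, M⟩_F ≥ 1-ε. If vvᵀ is a best rank-1 (Frobenius norm) approximation of M with v ≠ 0, then the unit vector û = v/‖v‖ satisfies ⟨u, û⟩² ≥ 1 - 8ε. -/
/-!
Write `t = uᵀMu` and `b = vᵀMv`. Expanding the Frobenius norm, comparing `vvᵀ` with the
competitor `(√t u)(√t u)ᵀ` gives `t² + ‖v‖⁴ ≤ 2b`, so by AM-GM `t ≤ b / ‖v‖² = ûᵀMû`. Hence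
`⟨uuᵀ + ûûᵀ, M⟩_F ≥ 2 - 2ε`, while Cauchy–Schwarz bounds it by
`‖uuᵀ + ûûᵀ‖_F = √(2 + 2⟨u, û⟩²)`, which forces `⟨u, û⟩² ≥ 1 - 4ε + 2ε²`.
-/

open Matrix Finset

section FrobeniusSums

variable {m n R : Type*} [Fintype m] [Fintype n]

theorem sum_sum_vecMulVec_mul [CommSemiring R] (x y : n → R) (M : Matrix n n R) :
    ∑ i, ∑ j, vecMulVec x y i j * M i j = x ⬝ᵥ M *ᵥ y := by
  simp only [vecMulVec_apply, dotProduct, mulVec, Finset.mul_sum]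
  exact Finset.sum_congr rfl fun i _ => Finset.sum_congr rfl fun j _ => by ring

theorem sum_sum_vecMulVec_mul_vecMulVec [CommSemiring R] (a b c d : n → R) :
    ∑ i, ∑ j, vecMulVec a b i j * vecMulVec c d i j = (a ⬝ᵥ c) * (b ⬝ᵥ d) := by
  simp only [vecMulVec_apply, dotProduct, Finset.sum_mul_sum]
  exact Finset.sum_congr rfl fun i _ => Finset.sum_congr rfl fun j _ => by ring

theorem sum_sum_sub_vecMulVec_sq [CommRing R] (M : Matrix n n R) (w : n → R) :
    ∑ i, ∑ j, ((M - vecMulVec w w) i j) ^ 2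
      = ∑ i, ∑ j, M i j ^ 2 - 2 * (w ⬝ᵥ M *ᵥ w) + (w ⬝ᵥ w) ^ 2 := by
  have h : ∀ i j, ((M - vecMulVec w w) i j) ^ 2
      = M i j ^ 2 - 2 * (vecMulVec w w i j * M i j) + vecMulVec w w i j * vecMulVec w w i j := by
    intro i j
    rw [Matrix.sub_apply]
    ring
  simp only [h, Finset.sum_add_distrib, Finset.sum_sub_distrib, ← Finset.mul_sum]
  rw [sum_sum_vecMulVec_mul_vecMulVec, sum_sum_vecMulVec_mul, sq]

theorem sum_sum_add_vecMulVec_sq [CommRing R] (x y : n → R) :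
    ∑ i, ∑ j, ((vecMulVec x x + vecMulVec y y) i j) ^ 2
      = (x ⬝ᵥ x) ^ 2 + 2 * (x ⬝ᵥ y) ^ 2 + (y ⬝ᵥ y) ^ 2 := by
  have h : ∀ i j, ((vecMulVec x x + vecMulVec y y) i j) ^ 2
      = vecMulVec x x i j * vecMulVec x x i j + 2 * (vecMulVec x x i j * vecMulVec y y i j)
        + vecMulVec y y i j * vecMulVec y y i j := by
    intro i j
    rw [Matrix.add_apply]
    ring
  simp only [h, Finset.sum_add_distrib, ← Finset.mul_sum, sum_sum_vecMulVec_mul_vecMulVec]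
  ring

theorem sq_sum_sum_mul_le [CommRing R] [LinearOrder R] [IsStrictOrderedRing R]
    (A B : Matrix m n R) :
    (∑ i, ∑ j, A i j * B i j) ^ 2 ≤ (∑ i, ∑ j, A i j ^ 2) * ∑ i, ∑ j, B i j ^ 2 := by
  simpa only [Fintype.sum_prod_type] using
    sum_mul_sq_le_sq_mul_sq univ (fun p : m × n => A p.1 p.2) (fun p => B p.1 p.2)

end FrobeniusSums

section RankOne

variable {n : Type*} [Fintype n]

def IsBestRankOneApprox (M : Matrix n n ℝ) (v : n → ℝ) : Prop :=
  ∀ w : n → ℝ, ∑ i, ∑ j, ((M - vecMulVec v v) i j) ^ 2 ≤ ∑ i, ∑ j, ((M - vecMulVec w w) i j) ^ 2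

theorem dotProduct_self_nonneg (v : n → ℝ) : 0 ≤ v ⬝ᵥ v :=
  Finset.sum_nonneg fun i _ => mul_self_nonneg (v i)

theorem dotProduct_self_pos {v : n → ℝ} (hv : v ≠ 0) : 0 < v ⬝ᵥ v :=
  (dotProduct_self_nonneg v).lt_of_ne' (dotProduct_self_eq_zero.not.mpr hv)

theorem dotProduct_self_inv_sqrt_smul {v : n → ℝ} (hv : v ≠ 0) :
    ((√(v ⬝ᵥ v))⁻¹ • v) ⬝ᵥ ((√(v ⬝ᵥ v))⁻¹ • v) = 1 := by
  have hs := dotProduct_self_pos hv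
  rw [smul_dotProduct, dotProduct_smul, smul_eq_mul, smul_eq_mul, ← mul_assoc, ← mul_inv,
    Real.mul_self_sqrt hs.le, inv_mul_cancel₀ hs.ne']

theorem IsBestRankOneApprox.mul_dotProduct_self_le {M : Matrix n n ℝ} {u v : n → ℝ}
    (hbest : IsBestRankOneApprox M v) (hu : u ⬝ᵥ u = 1) :
    (u ⬝ᵥ M *ᵥ u) * (v ⬝ᵥ v) ≤ v ⬝ᵥ M *ᵥ v := by
  simp only [IsBestRankOneApprox, sum_sum_sub_vecMulVec_sq] at hbest
  have hs := dotProduct_self_nonneg v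
  rcases le_or_gt (u ⬝ᵥ M *ᵥ u) 0 with ht | ht
  · have h0 := hbest 0
    simp only [mulVec_zero, dotProduct_zero] at h0
    nlinarith
  · have h := hbest (√(u ⬝ᵥ M *ᵥ u) • u)
    simp only [mulVec_smul, smul_dotProduct, dotProduct_smul, smul_eq_mul, hu] at h
    nlinarith [Real.mul_self_sqrt ht.le, sq_nonneg (u ⬝ᵥ M *ᵥ u - v ⬝ᵥ v)]

theorem IsBestRankOneApprox.dotProduct_mulVec_le_normalized {M : Matrix n n ℝ} {u v : n → ℝ}
    (hbest : IsBestRankOneApprox M v) (hu : u ⬝ᵥ u = 1) (hv : v ≠ 0) :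
    u ⬝ᵥ M *ᵥ u ≤ ((√(v ⬝ᵥ v))⁻¹ • v) ⬝ᵥ M *ᵥ ((√(v ⬝ᵥ v))⁻¹ • v) := by
  have hs := dotProduct_self_pos hv
  rw [mulVec_smul, smul_dotProduct, dotProduct_smul, smul_eq_mul, smul_eq_mul, ← mul_assoc,
    ← mul_inv, Real.mul_self_sqrt hs.le, inv_mul_eq_div, le_div_iff₀ hs]
  exact hbest.mul_dotProduct_self_le hu

theorem sq_add_dotProduct_mulVec_le {x y : n → ℝ} (hx : x ⬝ᵥ x = 1) (hy : y ⬝ᵥ y = 1)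
    (M : Matrix n n ℝ) :
    (x ⬝ᵥ M *ᵥ x + y ⬝ᵥ M *ᵥ y) ^ 2 ≤ (2 + 2 * (x ⬝ᵥ y) ^ 2) * ∑ i, ∑ j, M i j ^ 2 :=
  calc (x ⬝ᵥ M *ᵥ x + y ⬝ᵥ M *ᵥ y) ^ 2
      = (∑ i, ∑ j, (vecMulVec x x + vecMulVec y y) i j * M i j) ^ 2 := by
        simp only [Matrix.add_apply, add_mul, Finset.sum_add_distrib, sum_sum_vecMulVec_mul]
    _ ≤ (∑ i, ∑ j, ((vecMulVec x x + vecMulVec y y) i j) ^ 2) * ∑ i, ∑ j, M i j ^ 2 :=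
        sq_sum_sum_mul_le _ _
    _ = (2 + 2 * (x ⬝ᵥ y) ^ 2) * ∑ i, ∑ j, M i j ^ 2 := by
        rw [sum_sum_add_vecMulVec_sq, hx, hy]
        ring

end RankOne

theorem stmt16_general {d : ℕ} (ε : ℝ) (hε0 : 0 ≤ ε) (hε : ε < 1 / 8)
    (u : Fin d → ℝ) (hu : u ⬝ᵥ u = 1)
    (M : Matrix (Fin d) (Fin d) ℝ)
    (hMF : Real.sqrt (∑ i, ∑ j, (M i j) ^ 2) ≤ 1)
    (hcorr : 1 - ε ≤ ∑ i, ∑ j, (Matrix.vecMulVec u u) i j * M i j)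
    (v : Fin d → ℝ) (hv : v ≠ 0)
    (hbest : ∀ w : Fin d → ℝ,
      ∑ i, ∑ j, ((M - Matrix.vecMulVec v v) i j) ^ 2
        ≤ ∑ i, ∑ j, ((M - Matrix.vecMulVec w w) i j) ^ 2) :
    1 - 8 * ε ≤ (u ⬝ᵥ ((Real.sqrt (v ⬝ᵥ v))⁻¹ • v)) ^ 2 := by
  set û := (√(v ⬝ᵥ v))⁻¹ • v
  rw [sum_sum_vecMulVec_mul] at hcorr
  rw [Real.sqrt_le_one] at hMF
  have hrayleigh : u ⬝ᵥ M *ᵥ u ≤ û ⬝ᵥ M *ᵥ û :=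
    IsBestRankOneApprox.dotProduct_mulVec_le_normalized hbest hu hv
  have hCS := sq_add_dotProduct_mulVec_le hu (dotProduct_self_inv_sqrt_smul hv) M
  have hlower : 2 - 2 * ε ≤ u ⬝ᵥ M *ᵥ u + û ⬝ᵥ M *ᵥ û := by linarith
  nlinarith [pow_le_pow_left₀ (by linarith) hlower 2, sq_nonneg (u ⬝ᵥ û)]

/-- Matrix rank-1 approximation: `0 ≤ ε < 1/8`, `u` a unit vector, `M` symmetric PSD with
Frobenius norm at most `1` and Frobenius correlation `⟨u uᵀ, M⟩_F ≥ 1 - ε`. If `v vᵀ` is a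
best rank-1 approximation of `M` (in Frobenius norm) with `v ≠ 0`, then the unit vector
`û = v / ‖v‖` satisfies `⟨u, û⟩² ≥ 1 - 8 ε`. -/
theorem stmt16 {d : ℕ} (ε : ℝ) (hε0 : 0 ≤ ε) (hε : ε < 1 / 8)
    (u : Fin d → ℝ) (hu : u ⬝ᵥ u = 1)
    (M : Matrix (Fin d) (Fin d) ℝ) (hM : M.PosSemidef)
    (hMF : Real.sqrt (∑ i, ∑ j, (M i j) ^ 2) ≤ 1)
    (hcorr : 1 - ε ≤ ∑ i, ∑ j, (Matrix.vecMulVec u u) i j * M i j)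
    (v : Fin d → ℝ) (hv : v ≠ 0)
    (hbest : ∀ w : Fin d → ℝ,
      ∑ i, ∑ j, ((M - Matrix.vecMulVec v v) i j) ^ 2
        ≤ ∑ i, ∑ j, ((M - Matrix.vecMulVec w w) i j) ^ 2) :
    1 - 8 * ε ≤ (u ⬝ᵥ ((Real.sqrt (v ⬝ᵥ v))⁻¹ • v)) ^ 2 :=
  stmt16_general ε hε0 hε u hu M hMF hcorr v hv hbest
end
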